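/- Let (X, ρ) be a metric space, λ ∈ Δ∞, and x = (x_k)_{k∈ℕ} a sequence in X. Suppose there exist an infinite set B ⊆ ℕ that does not have λ-density zero and a compact subset C of X such that x_k ∈ C for all k ∈ B (i.e., x has a λ-nonthin subsequence lying in a compact set). Then the set Γ_x(λ) of λ-statistical cluster points of x is nonempty and closed. (This is the paper's Theorem 4.6, specialized to the PM space induced by a metric, where F_{xy} = ε_{ρ(x,y)} and the strong topology is the metric topology.) -/

import Mathlib

open Filter Topology

/-- `l` belongs to the class `Δ∞`: a nondecreasing (for indices `≥ 1`) sequence of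
positive reals tending to `∞` with `l 1 = 1` and `l (n+1) ≤ l n + 1`. -/
def DeltaInfty (l : ℕ → ℝ) : Prop :=
  (∀ n, 1 ≤ n → 0 < l n) ∧ (∀ m n, 1 ≤ m → m ≤ n → l m ≤ l n) ∧
    Tendsto l atTop atTop ∧ l 1 = 1 ∧ ∀ n, 1 ≤ n → l (n + 1) ≤ l n + 1

open Classical in
/-- The number of elements of `M` in the window `I_n = [n - l n + 1, n] ∩ ℕ`. -/
noncomputable def lamCount (l : ℕ → ℝ) (M : Set ℕ) (n : ℕ) : ℕ :=
  ((Finset.Icc 1 n).filter (fun (k : ℕ) => ((n : ℝ) - l n + 1 ≤ (k : ℝ)) ∧ k ∈ M)).card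

/-- `M ⊆ ℕ` has `λ`-density `r`: `|{k ∈ I_n : k ∈ M}| / l n → r`. -/
def lamDensity (l : ℕ → ℝ) (M : Set ℕ) (r : ℝ) : Prop :=
  Tendsto (fun n => (lamCount l M n : ℝ) / l n) atTop (𝓝 r)

/-- `Y` is a `λ`-statistical cluster point of `x`: for every `t > 0` the set
`{k : dist (x k) Y < t}` does not have `λ`-density zero. -/
def LamStatClusterPt {X : Type*} [MetricSpace X] (l : ℕ → ℝ) (x : ℕ → X) (Y : X) : Prop :=
  ∀ t > 0, ¬ lamDensity l {k | dist (x k) Y < t} 0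

/-!
Sets of `λ`-density zero form an ideal: they are closed under subsets and finite unions. If no
point were a `λ`-statistical cluster point, every point of the compact set `C` would have a ball
whose index set has `λ`-density zero; finitely many of these balls cover `C`, so `B` would have
`λ`-density zero. Closedness is the triangle inequality: a ball around a non-cluster point `Y`
witnessing density zero contains a smaller ball around every nearby point `Z`.
-/

section LamDensityZero

variable (l : ℕ → ℝ)

lemma lamCount_mono {M N : Set ℕ} (h : M ⊆ N) (n : ℕ) : lamCount l M n ≤ lamCount l N n := by
  classical
  exact Finset.card_le_card fun k hk => by
    simp only [Finset.mem_filter] at hk ⊢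
    exact ⟨hk.1, hk.2.1, h hk.2.2⟩

lemma lamCount_union_le (M N : Set ℕ) (n : ℕ) :
    lamCount l (M ∪ N) n ≤ lamCount l M n + lamCount l N n := by
  classical
  refine (Finset.card_le_card fun k hk => ?_).trans (Finset.card_union_le _ _)
  simp only [Finset.mem_filter, Finset.mem_union, Set.mem_union] at hk ⊢
  tauto

@[simp]
lemma lamCount_empty (n : ℕ) : lamCount l ∅ n = 0 := by
  simp [lamCount]

variable {l}

lemma lamDensity_empty : lamDensity l ∅ 0 := by
  simp [lamDensity]

-- Squeezing norms makes these two lemmas work whatever the sign of `l n`.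
lemma lamDensity_zero_of_subset {M N : Set ℕ} (h : M ⊆ N) (hN : lamDensity l N 0) :
    lamDensity l M 0 := by
  refine squeeze_zero_norm (a := fun n => (lamCount l N n : ℝ) / |l n|) (fun n => ?_)
    (by simpa using hN.norm)
  rw [norm_div, Real.norm_natCast, Real.norm_eq_abs]
  gcongr
  exact_mod_cast lamCount_mono l h n

lemma lamDensity_zero_union {M N : Set ℕ} (hM : lamDensity l M 0) (hN : lamDensity l N 0) :
    lamDensity l (M ∪ N) 0 := by
  refine squeeze_zero_norm (a := fun n => ((lamCount l M n + lamCount l N n : ℕ) : ℝ) / |l n|)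
    (fun n => ?_) (by simpa [add_div] using hM.norm.add hN.norm)
  rw [norm_div, Real.norm_natCast, Real.norm_eq_abs]
  gcongr
  exact_mod_cast lamCount_union_le l M N n

lemma lamDensity_zero_biUnion {ι : Type*} (s : Finset ι) {A : ι → Set ℕ}
    (h : ∀ i ∈ s, lamDensity l (A i) 0) : lamDensity l (⋃ i ∈ s, A i) 0 := by
  classical
  induction s using Finset.induction with
  | empty => simpa using lamDensity_empty
  | insert a s _ ih =>
    rw [Finset.set_biUnion_insert]
    exact lamDensity_zero_union (h a (Finset.mem_insert_self a s))
      (ih fun i hi => h i (Finset.mem_insert_of_mem hi))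

end LamDensityZero

section ClusterPoints

variable {X : Type*} [MetricSpace X] {l : ℕ → ℝ} {x : ℕ → X}

lemma not_lamStatClusterPt_iff {Y : X} :
    ¬ LamStatClusterPt l x Y ↔ ∃ t > 0, lamDensity l {k | dist (x k) Y < t} 0 := by
  simp [LamStatClusterPt]

lemma exists_lamStatClusterPt_mem_of_isCompact {B : Set ℕ} {C : Set X}
    (hB : ¬ lamDensity l B 0) (hC : IsCompact C) (hmem : ∀ k ∈ B, x k ∈ C) :
    ∃ Y ∈ C, LamStatClusterPt l x Y := by
  by_contra! h
  choose! t ht hd using fun Y hY => not_lamStatClusterPt_iff.1 (h Y hY)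
  obtain ⟨s, hsC, hcover⟩ := hC.elim_nhds_subcover (fun Y => Metric.ball Y (t Y))
    fun Y hY => Metric.ball_mem_nhds Y (ht Y hY)
  have hBsub : B ⊆ ⋃ Y ∈ s, {k | dist (x k) Y < t Y} := by
    intro k hk
    simpa only [Set.mem_iUnion, Metric.mem_ball, Set.mem_ofPred_eq] using hcover (hmem k hk)
  exact hB <| lamDensity_zero_of_subset hBsub <|
    lamDensity_zero_biUnion s fun Y hY => hd Y (hsC Y hY)

lemma isClosed_setOf_lamStatClusterPt (l : ℕ → ℝ) (x : ℕ → X) :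
    IsClosed {Y | LamStatClusterPt l x Y} := by
  refine isOpen_compl_iff.1 (Metric.isOpen_iff.2 fun Y hY => ?_)
  obtain ⟨t, ht, hd⟩ := not_lamStatClusterPt_iff.1 hY
  refine ⟨t / 2, half_pos ht, fun Z hZ => not_lamStatClusterPt_iff.2 ⟨t / 2, half_pos ht, ?_⟩⟩
  refine lamDensity_zero_of_subset (fun k (hk : dist (x k) Z < t / 2) => ?_) hd
  calc dist (x k) Y ≤ dist (x k) Z + dist Z Y := dist_triangle _ _ _
    _ < t / 2 + t / 2 := add_lt_add hk (Metric.mem_ball.1 hZ)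
    _ = t := add_halves t

end ClusterPoints

theorem lamStatClusterPts_nonempty_and_closed_general {X : Type*} [MetricSpace X]
    (l : ℕ → ℝ) (x : ℕ → X) (B : Set ℕ) (C : Set X)
    (hB : ¬ lamDensity l B 0) (hC : IsCompact C)
    (hmem : ∀ k ∈ B, x k ∈ C) :
    {Y | LamStatClusterPt l x Y}.Nonempty ∧ IsClosed {Y | LamStatClusterPt l x Y} := by
  obtain ⟨Y, -, hY⟩ := exists_lamStatClusterPt_mem_of_isCompact hB hC hmem
  exact ⟨⟨Y, hY⟩, isClosed_setOf_lamStatClusterPt l x⟩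

theorem lamStatClusterPts_nonempty_and_closed {X : Type*} [MetricSpace X]
    (l : ℕ → ℝ) (hl : DeltaInfty l) (x : ℕ → X) (B : Set ℕ) (C : Set X)
    (hBinf : B.Infinite) (hB : ¬ lamDensity l B 0) (hC : IsCompact C)
    (hmem : ∀ k ∈ B, x k ∈ C) :
    {Y | LamStatClusterPt l x Y}.Nonempty ∧ IsClosed {Y | LamStatClusterPt l x Y} :=
  lamStatClusterPts_nonempty_and_closed_general l x B C hB hC hmem
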